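/- Let d ≥ 4, k ≥ 2 an integer with 2k < d, d1 = k + 1, and f = x^d + x^{d−k}·y^{k} + y^{d−1}·z ∈ ℂ[x,y,z] (so f = x^d + x^{d2+1} y^{d1−1} + y^{d−1} z with d2 = d − d1). Then k·x·y^{k}·f_x − (d·x^k·y + (d−k)·y^{k+1})·f_y + (d(d−1)·x^k·z + (d−1)(d−k)·y^k·z)·f_z = 0. -/

import Mathlib

/-!
The syzygy only meets `f_x` through `x f_x` and `f_y` through `y f_y`, and `x ∂ₓ xⁿ = n xⁿ` removes
every truncated exponent `n - 1`; what remains is a ring identity up to `x^k x^(d-k) = x^d`.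
-/

open MvPolynomial

section

variable {σ R : Type*} [CommRing R]

theorem X_mul_pderiv_X_pow (i : σ) (n : ℕ) :
    X i * pderiv i (X i ^ n : MvPolynomial σ R) = C (n : R) * X i ^ n := by
  rw [pderiv_pow, pderiv_X_self, mul_one, map_natCast]
  cases n with
  | zero => simp
  | succ n => rw [Nat.add_sub_cancel, pow_succ]; ring

theorem pderiv_X_pow_of_ne {i j : σ} (h : j ≠ i) (n : ℕ) :
    pderiv i (X j ^ n : MvPolynomial σ R) = 0 := by
  rw [pderiv_pow, pderiv_X_of_ne h, mul_zero]

end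

namespace NearlyFreeCurve

noncomputable def poly (R : Type*) [CommRing R] (d k : ℕ) : MvPolynomial (Fin 3) R :=
  X 0 ^ d + X 0 ^ (d - k) * X 1 ^ k + X 1 ^ (d - 1) * X 2

variable {R : Type*} [CommRing R] {d k : ℕ}

theorem X_mul_pderiv_zero (hkd : k ≤ d) :
    X 0 * pderiv 0 (poly R d k) =
      C (d : R) * X 0 ^ d + C ((d : R) - k) * X 0 ^ (d - k) * X 1 ^ k := by
  have hx := X_mul_pderiv_X_pow (R := R) (0 : Fin 3)
  rw [← Nat.cast_sub hkd]
  simp only [poly, map_add, pderiv_mul, pderiv_X_pow_of_ne (by decide : (1 : Fin 3) ≠ 0),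
    pderiv_X_of_ne (by decide : (2 : Fin 3) ≠ 0)]
  linear_combination hx d + X 1 ^ k * hx (d - k)

theorem X_mul_pderiv_one (hd : 1 ≤ d) :
    X 1 * pderiv 1 (poly R d k) =
      C (k : R) * X 0 ^ (d - k) * X 1 ^ k + C ((d : R) - 1) * X 1 ^ (d - 1) * X 2 := by
  have hy := X_mul_pderiv_X_pow (R := R) (1 : Fin 3)
  rw [← Nat.cast_one, ← Nat.cast_sub hd]
  simp only [poly, map_add, pderiv_mul, pderiv_X_pow_of_ne (by decide : (0 : Fin 3) ≠ 1),
    pderiv_X_of_ne (by decide : (2 : Fin 3) ≠ 1)]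
  linear_combination X 0 ^ (d - k) * hy k + X 2 * hy (d - 1)

theorem pderiv_two : pderiv 2 (poly R d k) = X 1 ^ (d - 1) := by
  simp only [poly, map_add, pderiv_mul, pderiv_X_pow_of_ne (by decide : (0 : Fin 3) ≠ 2),
    pderiv_X_pow_of_ne (by decide : (1 : Fin 3) ≠ 2), pderiv_X_self]
  ring

theorem jacobian_syzygy (hkd : k ≤ d) (hd : 1 ≤ d) :
    C (k : R) * X 0 * X 1 ^ k * pderiv 0 (poly R d k)
      - (C (d : R) * X 0 ^ k * X 1 + C ((d : R) - k) * X 1 ^ (k + 1)) * pderiv 1 (poly R d k)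
      + (C ((d : R) * ((d : R) - 1)) * X 0 ^ k * X 2
          + C (((d : R) - 1) * ((d : R) - k)) * X 1 ^ k * X 2) * pderiv 2 (poly R d k) = 0 := by
  have hpow : (X 0 : MvPolynomial (Fin 3) R) ^ k * X 0 ^ (d - k) = X 0 ^ d := by
    rw [← pow_add, Nat.add_sub_cancel' hkd]
  rw [pderiv_two, map_mul, map_mul]
  linear_combination C (k : R) * X 1 ^ k * X_mul_pderiv_zero (R := R) hkd
    - (C (d : R) * X 0 ^ k + C ((d : R) - k) * X 1 ^ k) * X_mul_pderiv_one (R := R) (k := k) hd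
    - C (d : R) * C (k : R) * X 1 ^ k * hpow

end NearlyFreeCurve

theorem stmt_3 (d k : ℕ) (hkd : 2 * k < d)
    (f : MvPolynomial (Fin 3) ℂ)
    (hf : f = X 0 ^ d + X 0 ^ (d - k) * X 1 ^ k + X 1 ^ (d - 1) * X 2) :
    C (k : ℂ) * X 0 * X 1 ^ k * pderiv 0 f
      - (C (d : ℂ) * X 0 ^ k * X 1 + C ((d : ℂ) - k) * X 1 ^ (k + 1)) * pderiv 1 f
      + (C ((d : ℂ) * ((d : ℂ) - 1)) * X 0 ^ k * X 2
          + C (((d : ℂ) - 1) * ((d : ℂ) - k)) * X 1 ^ k * X 2) * pderiv 2 f = 0 := by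
  subst hf
  exact NearlyFreeCurve.jacobian_syzygy (by omega) (by omega)
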